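/- arXiv:2511.13639 — 8 statements merged into one kernel-verified Lean document; each statement's English description precedes it below -/
import Mathlib

section
/- If finite data points {(x_i, f_i, g_i)} satisfy f_i - f_j - ⟨g_j, x_i - x_j⟩ ≥ 0 for all pairs i, j and ‖g_i‖ ≤ M for all i, then the function f(y) = max_i {f_i + ⟨g_i, y - x_i⟩} is convex, M-Lipschitz, and satisfies f(x_i) = f_i and g_i ∈ ∂f(x_i) for all i. -/
open RealInnerProductSpace

/-- finite data satisfying the interpolation inequalities and gradient bound
is interpolated by the max-of-affine function, which is convex and `M`-Lipschitz. -/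
theorem klm_interpolation {d : ℕ} {ι : Type*} [Fintype ι] [Nonempty ι] (M : ℝ)
    (x g : ι → EuclideanSpace ℝ (Fin d)) (fv : ι → ℝ)
    (hQ : ∀ i j, 0 ≤ fv i - fv j - ⟪g j, x i - x j⟫)
    (hM : ∀ i, ‖g i‖ ≤ M)
    (F : EuclideanSpace ℝ (Fin d) → ℝ)
    (hF : ∀ y, F y = Finset.univ.sup' Finset.univ_nonempty
      (fun i => fv i + ⟪g i, y - x i⟫)) :
    ConvexOn ℝ Set.univ F ∧
    (∀ a b, |F a - F b| ≤ M * ‖a - b‖) ∧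
    (∀ i, F (x i) = fv i) ∧
    (∀ i, ∀ z, F (x i) + ⟪g i, z - x i⟫ ≤ F z) := by
  have hle : ∀ i y, fv i + ⟪g i, y - x i⟫ ≤ F y := by
    intro i y
    rw [hF]
    exact Finset.le_sup' (fun i => fv i + ⟪g i, y - x i⟫) (Finset.mem_univ i)
  have hFx : ∀ i, F (x i) = fv i := by
    intro i
    refine le_antisymm ?_ ?_
    · rw [hF]
      refine Finset.sup'_le _ _ fun j _ => ?_
      have := hQ i j
      linarith
    · have := hle i (x i)
      simpa using this
  have hlip : ∀ a b, F a - F b ≤ M * ‖a - b‖ := by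
    intro a b
    obtain ⟨i, -, hi⟩ := Finset.exists_mem_eq_sup' (Finset.univ_nonempty (α := ι))
      (fun i => fv i + ⟪g i, a - x i⟫)
    have hFa : F a = fv i + ⟪g i, a - x i⟫ := by rw [hF, hi]
    have h1 : fv i + ⟪g i, b - x i⟫ ≤ F b := hle i b
    have h2 : ⟪g i, a - x i⟫ - ⟪g i, b - x i⟫ = ⟪g i, a - b⟫ := by
      rw [← inner_sub_right]; congr 1; abel
    have h3 : ⟪g i, a - b⟫ ≤ ‖g i‖ * ‖a - b‖ := real_inner_le_norm _ _
    have h4 : ‖g i‖ * ‖a - b‖ ≤ M * ‖a - b‖ :=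
      mul_le_mul_of_nonneg_right (hM i) (norm_nonneg _)
    linarith
  refine ⟨⟨convex_univ, ?_⟩, ?_, hFx, ?_⟩
  · intro a _ b _ ta tb hta htb hab
    rw [hF]
    refine Finset.sup'_le _ _ fun i _ => ?_
    have key : fv i + ⟪g i, ta • a + tb • b - x i⟫
        = ta * (fv i + ⟪g i, a - x i⟫) + tb * (fv i + ⟪g i, b - x i⟫) := by
      simp only [inner_sub_right, inner_add_right, inner_smul_right]
      linear_combination (⟪g i, x i⟫ - fv i) * hab
    rw [key]
    have h1 : fv i + ⟪g i, a - x i⟫ ≤ F a := hle i a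
    have h2 : fv i + ⟪g i, b - x i⟫ ≤ F b := hle i b
    have := mul_le_mul_of_nonneg_left h1 hta
    have := mul_le_mul_of_nonneg_left h2 htb
    simp only [smul_eq_mul]
    linarith
  · intro a b
    rw [abs_sub_le_iff]
    constructor
    · exact hlip a b
    · have := hlip b a
      rwa [norm_sub_rev] at this
  · intro i z
    rw [hFx i]
    exact hle i z
end

section
/- Let (y, ζ, t) be feasible for the KLM planning problem at iteration n with value Θ = f_{n-1/2} - t ≥ 0, and define for i = n,…,N: x_i = y - ((f_{n-1/2} - t)/M) Σ_{j=n}^{i-1} e_j, f_i = f_{n-1/2}, g_i = M e_i, and x_⋆ = y - ((f_{n-1/2}-t)/M) Σ_{j=n}^N e_j, f_⋆ = t, g_⋆ = 0, where e_n,…,e_N are orthonormal vectors orthogonal to span{g_0,…,g_{n-1}}. Then ‖x_0 - x_⋆‖ ≤ R. -/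
open RealInnerProductSpace

/-- the constructed minimizer `x⋆ = y - ((f_{n-1/2}-t)/M) ∑_{j=n}^N e_j` of the
KLM hard instance satisfies `‖x₀ - x⋆‖ ≤ R`. -/
theorem klm_hard_instance_distance {d n N : ℕ} (hnN : n ≤ N)
    (M R fmin ζ t : ℝ) (hM : 0 < M) (hR : 0 ≤ R)
    (x0 y : EuclideanSpace ℝ (Fin d)) (e : ℕ → EuclideanSpace ℝ (Fin d))
    (hnorm : ∀ j, n ≤ j → j ≤ N → ‖e j‖ = 1)
    (horth : ∀ j k, n ≤ j → j ≤ N → n ≤ k → k ≤ N → j ≠ k → ⟪e j, e k⟫ = 0)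
    (hperp : ∀ j, n ≤ j → j ≤ N → ⟪e j, y - x0⟫ = 0)
    (hΘ : 0 ≤ fmin - t)
    (hfeas2 : fmin - M * ζ ≤ t)
    (hfeas3 : ‖y - x0‖ ^ 2 + ((N : ℝ) - n + 1) * ζ ^ 2 ≤ R ^ 2) :
    ‖x0 - (y - ((fmin - t) / M) • ∑ j ∈ Finset.Icc n N, e j)‖ ≤ R := by
  set c : ℝ := (fmin - t) / M with hc
  set S : EuclideanSpace ℝ (Fin d) := ∑ j ∈ Finset.Icc n N, e j with hS
  set v : EuclideanSpace ℝ (Fin d) := y - x0 with hv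
  have hcnn : 0 ≤ c := div_nonneg hΘ hM.le
  have hζ : c ≤ ζ := by
    rw [hc, div_le_iff₀ hM]
    linarith
  have hζnn : 0 ≤ ζ := le_trans hcnn hζ
  have hSv : ⟪S, v⟫ = 0 := by
    rw [hS, sum_inner]
    refine Finset.sum_eq_zero fun j hj => ?_
    rw [Finset.mem_Icc] at hj
    exact hperp j hj.1 hj.2
  have hSnorm : ‖S‖ ^ 2 = (N : ℝ) - n + 1 := by
    have : ⟪S, S⟫ = ((N : ℝ) - n + 1) := by
      rw [hS, sum_inner]
      have : ∀ j ∈ Finset.Icc n N, ⟪e j, ∑ k ∈ Finset.Icc n N, e k⟫ = 1 := by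
        intro j hj
        rw [Finset.mem_Icc] at hj
        rw [inner_sum, Finset.sum_eq_single j]
        · have := hnorm j hj.1 hj.2
          rw [real_inner_self_eq_norm_sq, this]; norm_num
        · intro k hk hkj
          rw [Finset.mem_Icc] at hk
          exact horth j k hj.1 hj.2 hk.1 hk.2 (Ne.symm hkj)
        · intro h; exact absurd (Finset.mem_Icc.mpr hj) h
      rw [Finset.sum_congr rfl this, Finset.sum_const, Nat.card_Icc,
        nsmul_eq_mul, mul_one, Nat.cast_sub (by omega : n ≤ N + 1)]
      push_cast
      ring
    rw [← real_inner_self_eq_norm_sq, this]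
  have key : ‖x0 - (y - c • S)‖ ^ 2 = ‖v‖ ^ 2 + c ^ 2 * ((N : ℝ) - n + 1) := by
    have : x0 - (y - c • S) = c • S - v := by rw [hv]; abel
    rw [this, norm_sub_sq_real, real_inner_smul_left, hSv, norm_smul, mul_pow]
    rw [← hSnorm]
    simp [abs_of_nonneg hcnn]
    ring
  have hsq : ‖x0 - (y - c • S)‖ ^ 2 ≤ R ^ 2 := by
    rw [key]
    have h1 : c ^ 2 ≤ ζ ^ 2 := pow_le_pow_left₀ hcnn hζ 2
    have h2 : (0:ℝ) ≤ (N : ℝ) - n + 1 := by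
      have : (n:ℝ) ≤ N := by exact_mod_cast hnN
      linarith
    nlinarith
  exact (pow_le_pow_iff_left₀ (norm_nonneg _) hR (by norm_num)).mp hsq
end

section
/- With the KLM lower-bound construction, for every i ∈ {n,…,N} and j ∈ {0,…,n-1}: f_i ≥ f_j + ⟨g_j, x_i - x_j⟩, i.e., the interpolation inequality Q_{i,j} ≥ 0 holds between each constructed future point and each past observed data point. -/
open RealInnerProductSpace

/-- interpolation inequality `Q_{i,j} ≥ 0` between each constructed future point
`x_i = y - ((f_{n-1/2}-t)/M) ∑_{l=n}^{i-1} e_l` (with value `f_i = f_{n-1/2}`) and each past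
observed data point `(x_j, f_j, g_j)`, `j < n`. -/
theorem klm_hard_instance_interp {d n N : ℕ}
    (M fmin t : ℝ) (hM : 0 < M)
    (x g : ℕ → EuclideanSpace ℝ (Fin d)) (fv : ℕ → ℝ)
    (y : EuclideanSpace ℝ (Fin d)) (e : ℕ → EuclideanSpace ℝ (Fin d))
    (hΘ : 0 ≤ fmin - t)
    (hcons : ∀ j < n, fv j + ⟪g j, y - x j⟫ ≤ t)
    (hperp : ∀ j < n, ∀ l, n ≤ l → l ≤ N → ⟪g j, e l⟫ = 0) :
    ∀ i, n ≤ i → i ≤ N → ∀ j < n,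
      fv j + ⟪g j, (y - ((fmin - t) / M) • ∑ l ∈ Finset.Ico n i, e l) - x j⟫ ≤ fmin := by
  intro i hi hiN j hj
  have hsum : ⟪g j, ∑ l ∈ Finset.Ico n i, e l⟫ = 0 := by
    rw [inner_sum]
    refine Finset.sum_eq_zero fun l hl => ?_
    obtain ⟨h1, h2⟩ := Finset.mem_Ico.mp hl
    exact hperp j hj l h1 (le_trans (Nat.le_of_lt_succ (Nat.lt_succ_of_lt h2)) hiN)
  have hrw : ⟪g j, (y - ((fmin - t) / M) • ∑ l ∈ Finset.Ico n i, e l) - x j⟫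
      = ⟪g j, y - x j⟫ := by
    rw [sub_right_comm, inner_sub_right, inner_smul_right, hsum, mul_zero, sub_zero]
  rw [hrw]
  linarith [hcons j hj]
end

section
/- Zero-chain property for max-of-affine functions with orthogonal late gradients: let f(x) = max_{i∈I}{f_i + ⟨g_i, x - x_i⟩} where for all i ≥ n the value f_i + ⟨g_i, x - x_i⟩ equals the constant c on the affine subspace x_0 + span{g_0,…,g_{j-1}} for j with n ≤ j ≤ i (due to g_i ⊥ span{g_0,…,g_{i-1}} and x_i - x_0 ∈ span of earlier gradients). Then for any x ∈ x_0 + span{g_0,…,g_{j-1}} with n ≤ j ≤ N-1, there exists an active index k ≤ j, i.e., g_k ∈ ∂f(x) for some k ≤ j. -/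
open RealInnerProductSpace

/-! Since the subspaces `x₀ + span{g_l | l < i}` increase with `i`, the point `x` lies in all of
them for `i ≥ j`, so every piece with index `≥ j` takes the value `c` at `x`, and `f⋆ ≤ c`.
Hence a piece of largest value at `x` among the indices `≤ j` is maximal among all pieces,
i.e. active, and its gradient is a subgradient. -/

section MaxOfAffine

variable {E ι : Type*} [NormedAddCommGroup E] [InnerProductSpace ℝ E] [Fintype ι] [Nonempty ι]

lemma max_sup'_eq_of_forall_le {p : ι → ℝ} {fs : ℝ} {k : ι} (hk : ∀ i, p i ≤ p k)
    (hfs : fs ≤ p k) : max (Finset.univ.sup' Finset.univ_nonempty p) fs = p k := by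
  rw [max_eq_left_iff.mpr (hfs.trans (Finset.le_sup' p (Finset.mem_univ k)))]
  exact le_antisymm (Finset.sup'_le _ _ fun i _ => hk i) (Finset.le_sup' p (Finset.mem_univ k))

lemma affine_add_inner_sub (a : ℝ) (v y x z : E) :
    a + ⟪v, x - y⟫ + ⟪v, z - x⟫ = a + ⟪v, z - y⟫ := by
  rw [add_assoc, ← inner_add_right, sub_add_sub_cancel']

lemma inner_le_maxAffine_of_active (fv : ι → ℝ) (g xv : ι → E) (fs : ℝ) {F : E → ℝ}
    (hF : ∀ z, F z = max
      (Finset.univ.sup' Finset.univ_nonempty (fun i => fv i + ⟪g i, z - xv i⟫)) fs)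
    {x : E} {k : ι} (hk : F x = fv k + ⟪g k, x - xv k⟫) (z : E) :
    F x + ⟪g k, z - x⟫ ≤ F z := by
  rw [hk, affine_add_inner_sub, hF z]
  exact le_max_of_le_left (Finset.le_sup' (fun i => fv i + ⟪g i, z - xv i⟫) (Finset.mem_univ k))

end MaxOfAffine

lemma Fin.exists_le_forall_le_of_eq_of_le {α : Type*} [LinearOrder α] {m j : ℕ} (hj : j < m)
    (p : Fin m → α) {c : α} (hc : ∀ i : Fin m, j ≤ i → p i = c) :
    ∃ k : Fin m, (k : ℕ) ≤ j ∧ ∀ i, p i ≤ p k := by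
  classical
  obtain ⟨k, hk, hmax⟩ := (Finset.univ.filter fun i : Fin m => (i : ℕ) ≤ j).exists_max_image p
    ⟨⟨j, hj⟩, by simp⟩
  refine ⟨k, by simpa using hk, fun i => ?_⟩
  rcases le_total (i : ℕ) j with hij | hji
  · exact hmax i (by simpa using hij)
  · rw [hc i hji, ← hc ⟨j, hj⟩ le_rfl]
    exact hmax _ (by simp)

/-- zero-chain property for max-of-affine functions with orthogonal late
gradients: if every affine piece with index `i ≥ n` takes the constant value `c` on the
affine subspace `x₀ + span{g₀,…,g_{i-1}}`, the star piece has value `f⋆ ≤ c`, and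
`x ∈ x₀ + span{g₀,…,g_{j-1}}` with `n ≤ j ≤ N-1`, then some piece with index `k ≤ j`
is active at `x`, so `g_k ∈ ∂f(x)`. -/
theorem klm_zero_chain {d n N j : ℕ} (hnj : n ≤ j) (hjN : j < N) (c fs : ℝ)
    (x0 : EuclideanSpace ℝ (Fin d))
    (xv g : Fin (N + 1) → EuclideanSpace ℝ (Fin d)) (fv : Fin (N + 1) → ℝ)
    (F : EuclideanSpace ℝ (Fin d) → ℝ)
    (hF : ∀ z, F z = max
      (Finset.univ.sup' Finset.univ_nonempty
        (fun i : Fin (N + 1) => fv i + ⟪g i, z - xv i⟫)) fs)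
    (x : EuclideanSpace ℝ (Fin d))
    (hx : x - x0 ∈ Submodule.span ℝ (g '' {l : Fin (N + 1) | (l : ℕ) < j}))
    (hconst : ∀ i : Fin (N + 1), n ≤ (i : ℕ) → ∀ z : EuclideanSpace ℝ (Fin d),
      z - x0 ∈ Submodule.span ℝ (g '' {l : Fin (N + 1) | (l : ℕ) < (i : ℕ)}) →
      fv i + ⟪g i, z - xv i⟫ = c)
    (hstar : fs ≤ c) :
    ∃ k : Fin (N + 1), (k : ℕ) ≤ j ∧ ∀ z, F x + ⟪g k, z - x⟫ ≤ F z := by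
  set p : Fin (N + 1) → ℝ := fun i => fv i + ⟪g i, x - xv i⟫
  have hj_lt : j < N + 1 := hjN.trans (Nat.lt_succ_self N)
  have htail : ∀ i : Fin (N + 1), j ≤ i → p i = c := fun i hji =>
    hconst i (hnj.trans hji) x
      (Submodule.span_mono (Set.image_mono fun _ hl => lt_of_lt_of_le hl hji) hx)
  obtain ⟨k, hkj, hkmax⟩ := Fin.exists_le_forall_le_of_eq_of_le hj_lt p htail
  have hck : c ≤ p k := htail ⟨j, hj_lt⟩ le_rfl ▸ hkmax _
  have hFx : F x = p k := (hF x).trans (max_sup'_eq_of_forall_le hkmax (hstar.trans hck))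
  exact ⟨k, hkj, inner_le_maxAffine_of_active fv g xv fs hF hFx⟩
end

section
/- Hardness of the KLM instance: under the construction f_H(x) = max_{i∈{0,…,N,⋆}}{f_i + ⟨g_i, x - x_i⟩} from the KLM lower bound, any point x ∈ x_0 + span{g_0,…,g_{N-1}} satisfies f_H(x) ≥ f_⋆ + Θ_n, where Θ_n = f_{n-1/2} - t. -/
open RealInnerProductSpace

/-- hardness of the KLM instance: for the constructed max-of-affine function
`f_H`, any `x ∈ x₀ + span{g₀,…,g_{N-1}}` satisfies `f_H(x) ≥ f⋆ + Θ_n`, using that the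
`N`-th piece has value `f_N = f⋆ + Θ_n` and gradient `g_N` orthogonal to `x - x_N`. -/
theorem klm_hardness {d n N : ℕ} (Θ t fmin fstar : ℝ)
    (x0 : EuclideanSpace ℝ (Fin d))
    (xv g : Fin (N + 2) → EuclideanSpace ℝ (Fin d)) (fv : Fin (N + 2) → ℝ)
    (hΘ : Θ = fmin - t)
    (iN : Fin (N + 2)) (hiN : (iN : ℕ) = N)
    (hfN : fv iN = fstar + Θ)
    (A B : Set (EuclideanSpace ℝ (Fin d)))
    (x : EuclideanSpace ℝ (Fin d))
    (hx : x - x0 ∈ Submodule.span ℝ A)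
    (hxN : xv iN - x0 ∈ Submodule.span ℝ B)
    (horthA : ∀ v ∈ A, ⟪g iN, v⟫ = 0)
    (horthB : ∀ v ∈ B, ⟪g iN, v⟫ = 0)
    (F : EuclideanSpace ℝ (Fin d) → ℝ)
    (hF : ∀ z, F z = Finset.univ.sup' Finset.univ_nonempty
      (fun i : Fin (N + 2) => fv i + ⟪g i, z - xv i⟫)) :
    fstar + Θ ≤ F x := by
  have key : ∀ (S : Set (EuclideanSpace ℝ (Fin d))), (∀ v ∈ S, ⟪g iN, v⟫ = 0) →
      ∀ v ∈ Submodule.span ℝ S, ⟪g iN, v⟫ = 0 := by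
    intro S hS v hv
    induction hv using Submodule.span_induction with
    | mem w hw => exact hS w hw
    | zero => simp
    | add a b _ _ ha hb => rw [inner_add_right, ha, hb]; ring
    | smul c a _ ha => rw [inner_smul_right, ha]; ring
  have h1 : ⟪g iN, x - x0⟫ = 0 := key A horthA _ hx
  have h2 : ⟪g iN, xv iN - x0⟫ = 0 := key B horthB _ hxN
  have h3 : ⟪g iN, x - xv iN⟫ = 0 := by
    have : x - xv iN = (x - x0) - (xv iN - x0) := by abel
    rw [this, inner_sub_right, h1, h2]; ring
  rw [hF x]
  calc fstar + Θ = fv iN + ⟪g iN, x - xv iN⟫ := by rw [hfN, h3]; ring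
    _ ≤ _ := Finset.le_sup' (fun i : Fin (N + 2) => fv i + ⟪g i, x - xv i⟫) (Finset.mem_univ iN)
end

section
/- OPPA induction step identity: given m, n, real τ', τ_n, vectors z', y_m, z_{n+1}, g_n, y_n, x_n, with τ_n = τ' + (1/L_n)(1 + √(1 + 2L_nτ')), x_n = (τ'/τ_n)y_m + ((τ_n - τ')/τ_n)z', y_n = x_n - g_n/L_n, z_{n+1} = z' - (τ_n - τ')g_n, and H' = τ'(f_⋆ - f_m) - (1/2)‖z' - y_⋆‖² + (1/2)‖x_0 - y_⋆‖², H_n = τ_n(f_⋆ - f_n) - (1/2)‖z_{n+1} - y_⋆‖² + (1/2)‖x_0 - y_⋆‖², then H_n = H' + (τ_n - τ')Q_{⋆,n} + τ' Q_{m,n}, where Q_{i,j} = f_i - f_j - ⟨g_j, y_i - y_j⟩ (with y_⋆, f_⋆, g_⋆ = 0 for index ⋆). Consequently, if H' ≥ 0, Q_{⋆,n} ≥ 0 and Q_{m,n} ≥ 0, then H_n ≥ 0. -/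
open RealInnerProductSpace

/-!
Write `a = τ_n - τ'`. Since `τ_n x_n = τ' y_m + a z'`, the combination
`a (y_⋆ - y_n) + τ' (y_m - y_n)` collapses to `(τ_n / L) g_n - a (z' - y_⋆)`, while expanding
`‖z' - a g_n - y_⋆‖²` produces the same cross term `a ⟪g_n, z' - y_⋆⟫` together with `a² ‖g_n‖²`.
The two `‖g_n‖²` terms cancel exactly because the step size satisfies `L a² = 2 τ_n`.
-/

section OPPA

variable {E : Type*} [NormedAddCommGroup E] [InnerProductSpace ℝ E]

/-- The potential `H`. -/
noncomputable def oppaPotential (fstar τ f : ℝ) (z ystar x0 : E) : ℝ :=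
  τ * (fstar - f) - (1 / 2) * ‖z - ystar‖ ^ 2 + (1 / 2) * ‖x0 - ystar‖ ^ 2

/-- The gap `Q_{i,j}`. -/
def interpolationGap (fi fj : ℝ) (gj yi yj : E) : ℝ :=
  fi - fj - ⟪gj, yi - yj⟫

theorem inner_interpolation_combination {L τ' τn : ℝ} {z' ym gn yn xn ystar : E}
    (hxn : τn • xn = τ' • ym + (τn - τ') • z') (hyn : yn = xn - (1 / L) • gn) :
    (τn - τ') * ⟪gn, ystar - yn⟫ + τ' * ⟪gn, ym - yn⟫
      = τn / L * ‖gn‖ ^ 2 - (τn - τ') * ⟪gn, z' - ystar⟫ := by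
  have hyn' : τn • yn = τ' • ym + (τn - τ') • z' - (τn / L) • gn := by
    rw [hyn, smul_sub, hxn, smul_smul, mul_one_div]
  have hcomb : (τn - τ') • (ystar - yn) + τ' • (ym - yn)
      = (τn / L) • gn - (τn - τ') • (z' - ystar) :=
    calc (τn - τ') • (ystar - yn) + τ' • (ym - yn)
        = (τn - τ') • ystar + τ' • ym - τn • yn := by module
      _ = _ := by rw [hyn']; module
  simpa only [inner_add_right, inner_sub_right, real_inner_smul_right,
    real_inner_self_eq_norm_sq] using congrArg (fun v => ⟪gn, v⟫) hcomb

theorem norm_sub_smul_sub_sq (a : ℝ) (z g y : E) :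
    ‖z - a • g - y‖ ^ 2 = ‖z - y‖ ^ 2 - 2 * a * ⟪g, z - y⟫ + a ^ 2 * ‖g‖ ^ 2 := by
  rw [sub_right_comm, norm_sub_sq_real, real_inner_smul_right, norm_smul, mul_pow,
    Real.norm_eq_abs, sq_abs, real_inner_comm]
  ring

theorem oppaPotential_step_eq {L τ' τn fstar fm fn : ℝ} {x0 z' ym gn yn xn ystar : E}
    (hL : L ≠ 0) (hstep : L * (τn - τ') ^ 2 = 2 * τn)
    (hxn : τn • xn = τ' • ym + (τn - τ') • z') (hyn : yn = xn - (1 / L) • gn) :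
    oppaPotential fstar τn fn (z' - (τn - τ') • gn) ystar x0
      = oppaPotential fstar τ' fm z' ystar x0
        + (τn - τ') * interpolationGap fstar fn gn ystar yn
        + τ' * interpolationGap fm fn gn ym yn := by
  have hgn : τn / L * ‖gn‖ ^ 2 = (1 / 2) * (τn - τ') ^ 2 * ‖gn‖ ^ 2 := by
    field_simp
    linear_combination (-‖gn‖ ^ 2) * hstep
  unfold oppaPotential interpolationGap
  linear_combination (-1 / 2) * norm_sub_smul_sub_sq (τn - τ') z' gn ystar
    + inner_interpolation_combination (ystar := ystar) hxn hyn + hgn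

end OPPA

theorem oppa_weight_gap_sq {L τ' τn : ℝ} (hL : 0 < L) (hτ' : 0 ≤ τ')
    (hτn : τn = τ' + (1 / L) * (1 + Real.sqrt (1 + 2 * L * τ'))) :
    L * (τn - τ') ^ 2 = 2 * τn := by
  have hs := Real.sq_sqrt (show 0 ≤ 1 + 2 * L * τ' by positivity)
  set s := Real.sqrt (1 + 2 * L * τ')
  rw [hτn]
  field_simp
  linear_combination hs

theorem oppa_weight_lt {L τ' τn : ℝ} (hL : 0 < L)
    (hτn : τn = τ' + (1 / L) * (1 + Real.sqrt (1 + 2 * L * τ'))) : τ' < τn := by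
  rw [hτn]
  exact lt_add_of_pos_right _ (by positivity)

/-- OPPA induction step identity
`H_n = H' + (τ_n - τ')Q_{⋆,n} + τ' Q_{m,n}`, and consequently `H_n ≥ 0` whenever
`H' ≥ 0`, `Q_{⋆,n} ≥ 0`, and `Q_{m,n} ≥ 0`. -/
theorem oppa_induction_step {d : ℕ} (L τ' τn fstar fm fn : ℝ)
    (hL : 0 < L) (hτ' : 0 ≤ τ')
    (x0 z' ym zn1 gn yn xn ystar : EuclideanSpace ℝ (Fin d))
    (hτn : τn = τ' + (1 / L) * (1 + Real.sqrt (1 + 2 * L * τ')))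
    (hxn : xn = (τ' / τn) • ym + ((τn - τ') / τn) • z')
    (hyn : yn = xn - (1 / L) • gn)
    (hzn1 : zn1 = z' - (τn - τ') • gn) :
    (τn * (fstar - fn) - (1 / 2) * ‖zn1 - ystar‖ ^ 2 + (1 / 2) * ‖x0 - ystar‖ ^ 2
        = (τ' * (fstar - fm) - (1 / 2) * ‖z' - ystar‖ ^ 2 + (1 / 2) * ‖x0 - ystar‖ ^ 2)
          + (τn - τ') * (fstar - fn - ⟪gn, ystar - yn⟫)
          + τ' * (fm - fn - ⟪gn, ym - yn⟫)) ∧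
    (0 ≤ τ' * (fstar - fm) - (1 / 2) * ‖z' - ystar‖ ^ 2 + (1 / 2) * ‖x0 - ystar‖ ^ 2 →
      0 ≤ fstar - fn - ⟪gn, ystar - yn⟫ →
      0 ≤ fm - fn - ⟪gn, ym - yn⟫ →
      0 ≤ τn * (fstar - fn) - (1 / 2) * ‖zn1 - ystar‖ ^ 2 + (1 / 2) * ‖x0 - ystar‖ ^ 2) := by
  have hgrowth := oppa_weight_lt hL hτn
  have hτn0 : τn ≠ 0 := (hτ'.trans_lt hgrowth).ne'
  have hxn' : τn • xn = τ' • ym + (τn - τ') • z' := by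
    rw [hxn, smul_add, smul_smul, smul_smul, mul_div_cancel₀ _ hτn0, mul_div_cancel₀ _ hτn0]
  have hid : oppaPotential fstar τn fn zn1 ystar x0 = oppaPotential fstar τ' fm z' ystar x0
      + (τn - τ') * interpolationGap fstar fn gn ystar yn
      + τ' * interpolationGap fm fn gn ym yn :=
    hzn1 ▸ oppaPotential_step_eq hL.ne' (oppa_weight_gap_sq hL hτ' hτn) hxn' hyn
  refine ⟨hid, fun hH hQstar hQm => ?_⟩
  have hnonneg : 0 ≤ oppaPotential fstar τn fn zn1 ystar x0 := by
    rw [hid]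
    exact add_nonneg (add_nonneg hH (mul_nonneg (sub_nonneg.2 hgrowth.le) hQstar))
      (mul_nonneg hτ' hQm)
  exact hnonneg
end

section
/- SPPPA certificate identity: with Z = [z_1 - x_0, …, z_n - x_0], G = [g_0,…,g_{n-1}], q_i = f_i - ⟨g_i, y_i - x_0⟩, a_i = (1/2)‖z_{i+1} - x_0‖² + τ_i(f_i - f_m), b_i = q_i - f_m, and for nonnegative vectors μ, λ ∈ ℝ^n, setting τ' = ⟨τ, μ⟩ + ⟨1, λ⟩, z' = x_0 + Zμ - Gλ, ε = ⟨μ, a⟩ + ⟨λ, b⟩ - (1/2)‖Zμ - Gλ‖², it holds that τ'(f_⋆ - f_m) - (1/2)‖z' - y_⋆‖² + (1/2)‖x_0 - y_⋆‖² = Σ_i μ_i H_i + Σ_i λ_i Q_{⋆,i} + ε, where H_i = τ_i(f_⋆ - f_i) + (1/2)‖x_0 - y_⋆‖² - (1/2)‖z_{i+1} - y_⋆‖² and Q_{⋆,i} = f_⋆ - f_i - ⟨g_i, y_⋆ - y_i⟩. -/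
open RealInnerProductSpace

/-- SPPPA certificate identity: with `τ' = ⟨τ,μ⟩ + ⟨1,λ⟩`,
`z' = x₀ + Zμ - Gλ`, and `ε = ⟨μ,a⟩ + ⟨λ,b⟩ - ½‖Zμ - Gλ‖²`, one has
`τ'(f⋆ - f_m) - ½‖z' - y⋆‖² + ½‖x₀ - y⋆‖² = Σᵢ μᵢ Hᵢ + Σᵢ λᵢ Q_{⋆,i} + ε`. -/
theorem spppa_certificate_identity {d n : ℕ}
    (x0 ystar : EuclideanSpace ℝ (Fin d))
    (y z g : Fin n → EuclideanSpace ℝ (Fin d))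
    (fv τv : Fin n → ℝ) (fstar fm : ℝ)
    (μ lam : Fin n → ℝ) (hμ : ∀ i, 0 ≤ μ i) (hlam : ∀ i, 0 ≤ lam i)
    (q a b : Fin n → ℝ)
    (hq : ∀ i, q i = fv i - ⟪g i, y i - x0⟫)
    (ha : ∀ i, a i = (1 / 2) * ‖z i - x0‖ ^ 2 + τv i * (fv i - fm))
    (hb : ∀ i, b i = q i - fm)
    (τ' ε : ℝ) (z' : EuclideanSpace ℝ (Fin d))
    (hτ' : τ' = (∑ i, τv i * μ i) + ∑ i, lam i)
    (hz' : z' = x0 + (∑ i, μ i • (z i - x0)) - ∑ i, lam i • g i)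
    (hε : ε = (∑ i, μ i * a i) + (∑ i, lam i * b i)
        - (1 / 2) * ‖(∑ i, μ i • (z i - x0)) - ∑ i, lam i • g i‖ ^ 2)
    (H Q : Fin n → ℝ)
    (hH : ∀ i, H i = τv i * (fstar - fv i) + (1 / 2) * ‖x0 - ystar‖ ^ 2
        - (1 / 2) * ‖z i - ystar‖ ^ 2)
    (hQ : ∀ i, Q i = fstar - fv i - ⟪g i, ystar - y i⟫) :
    τ' * (fstar - fm) - (1 / 2) * ‖z' - ystar‖ ^ 2 + (1 / 2) * ‖x0 - ystar‖ ^ 2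
      = (∑ i, μ i * H i) + (∑ i, lam i * Q i) + ε := by
  have key : ∀ (u w : EuclideanSpace ℝ (Fin d)),
      ‖u + w‖ ^ 2 = ‖u‖ ^ 2 + 2 * ⟪u, w⟫ + ‖w‖ ^ 2 := by
    intro u w
    rw [norm_add_sq_real]
  subst hτ' hz' hε
  set v : EuclideanSpace ℝ (Fin d) := (∑ i, μ i • (z i - x0)) - ∑ i, lam i • g i with hv
  have h1 : x0 + (∑ i, μ i • (z i - x0)) - (∑ i, lam i • g i) - ystar
      = (x0 - ystar) + v := by rw [hv]; abel
  rw [h1, key]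
  have h2 : ⟪x0 - ystar, v⟫ =
      (∑ i, μ i * ⟪x0 - ystar, z i - x0⟫) - ∑ i, lam i * ⟪x0 - ystar, g i⟫ := by
    rw [hv, inner_sub_right, inner_sum, inner_sum]
    simp [inner_smul_right]
  have e1 : (∑ i, μ i * H i) + (∑ i, μ i * a i)
      = (∑ i, μ i * τv i * (fstar - fm)) - ∑ i, μ i * ⟪x0 - ystar, z i - x0⟫ := by
    rw [← Finset.sum_add_distrib, ← Finset.sum_sub_distrib]
    refine Finset.sum_congr rfl fun i _ => ?_
    have hz : z i - ystar = (z i - x0) + (x0 - ystar) := by abel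
    have hk := key (z i - x0) (x0 - ystar)
    rw [hH, ha, hz, hk, real_inner_comm (z i - x0) (x0 - ystar)]
    ring
  have e2 : (∑ i, lam i * Q i) + (∑ i, lam i * b i)
      = (∑ i, lam i * (fstar - fm)) + ∑ i, lam i * ⟪x0 - ystar, g i⟫ := by
    rw [← Finset.sum_add_distrib, ← Finset.sum_add_distrib]
    refine Finset.sum_congr rfl fun i _ => ?_
    have hin : ⟪g i, ystar - y i⟫ + ⟪g i, y i - x0⟫ = -⟪x0 - ystar, g i⟫ := by
      rw [← inner_add_right, real_inner_comm]
      have : ystar - y i + (y i - x0) = -(x0 - ystar) := by abel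
      rw [this, inner_neg_left]
    rw [hQ, hb, hq]
    linear_combination (-lam i) * hin
  have e3 : (∑ i, μ i * τv i * (fstar - fm)) = (∑ i, τv i * μ i) * (fstar - fm) := by
    rw [Finset.sum_mul]
    exact Finset.sum_congr rfl fun i _ => by ring
  have e4 : (∑ i, lam i * (fstar - fm)) = (∑ i, lam i) * (fstar - fm) := by
    rw [Finset.sum_mul]
  linarith [e1, e2, h2, e3, e4]
end

section
/- SPPPA future-sequence tightness: with the SPPPA hard-instance construction (τ_i = τ_{i-1} + (1/L_i)(1+√(1+2L_iτ_{i-1})), ‖g_i‖² = (f_{i-1} - f_⋆)/(τ_i - τ_{i-1}), f_i = f_{i-1} - ‖g_i‖²/L_i), the quantity A_i := τ_i(f_i - f_⋆) is nondecreasing in i. -/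
lemma spppa_step (L τ' f' fstar : ℝ) (hL : 0 < L) (hτ' : 0 ≤ τ') (hf' : fstar ≤ f') :
    0 ≤ τ' + (1 / L) * (1 + Real.sqrt (1 + 2 * L * τ')) ∧
    fstar ≤ f' - ((f' - fstar) / ((τ' + (1 / L) * (1 + Real.sqrt (1 + 2 * L * τ'))) - τ')) / L ∧
    τ' * (f' - fstar) ≤ (τ' + (1 / L) * (1 + Real.sqrt (1 + 2 * L * τ'))) *
      ((f' - ((f' - fstar) / ((τ' + (1 / L) * (1 + Real.sqrt (1 + 2 * L * τ')))- τ')) / L) - fstar) := by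
  set s := Real.sqrt (1 + 2 * L * τ') with hsdef
  have hs2 : s ^ 2 = 1 + 2 * L * τ' := Real.sq_sqrt (by nlinarith)
  have hs0 : 0 ≤ s := Real.sqrt_nonneg _
  have hs1 : 1 ≤ s := by nlinarith
  have hLne : L ≠ 0 := ne_of_gt hL
  have h1s : (0:ℝ) < 1 + s := by linarith
  have hδ : (τ' + (1 / L) * (1 + s)) - τ' = (1 + s) / L := by field_simp; ring
  have hkey : f' - ((f' - fstar) / ((τ' + (1 / L) * (1 + s)) - τ')) / L - fstar
      = (f' - fstar) * s / (1 + s) := by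
    rw [hδ]; field_simp; ring
  have hF : 0 ≤ f' - fstar := by linarith
  refine ⟨by positivity, ?_, ?_⟩
  · have : 0 ≤ (f' - fstar) * s / (1 + s) := by positivity
    linarith [hkey ▸ this]
  · rw [show (f' - ((f' - fstar) / ((τ' + (1 / L) * (1 + s)) - τ')) / L) - fstar
        = (f' - fstar) * s / (1 + s) from hkey, ← sub_nonneg]
    have h2 : (τ' + (1 / L) * (1 + s)) * ((f' - fstar) * s / (1 + s)) - τ' * (f' - fstar)
        = ((f' - fstar) * ((1 + s) * s / L - τ')) / (1 + s) := by
      field_simp; ring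
    rw [h2]
    have hD : 0 ≤ (1 + s) * s / L - τ' := by
      rw [sub_nonneg, le_div_iff₀ hL]
      nlinarith [hs2, sq_nonneg (s + 1)]
    exact div_nonneg (mul_nonneg hF hD) h1s.le

/-- SPPPA future-sequence tightness: with
`τ_i = τ_{i-1} + (1/L_i)(1 + √(1 + 2L_i τ_{i-1}))`, `‖g_i‖² = (f_{i-1} - f⋆)/(τ_i - τ_{i-1})`
(denoted `γ i`), and `f_i = f_{i-1} - ‖g_i‖²/L_i`, the quantity `A_i = τ_i(f_i - f⋆)` is
nondecreasing over `i = n,…,N` (including the base step `A_n ≥ τ'(f_m - f⋆)`). -/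
theorem spppa_future_monotone (n N : ℕ) (hn : 1 ≤ n) (fstar : ℝ)
    (L τv fv γ : ℕ → ℝ)
    (hL : ∀ i, n ≤ i → i ≤ N → 0 < L i)
    (hτ0 : 0 ≤ τv (n - 1)) (hf0 : fstar ≤ fv (n - 1))
    (hτ : ∀ i, n ≤ i → i ≤ N →
      τv i = τv (i - 1) + (1 / L i) * (1 + Real.sqrt (1 + 2 * L i * τv (i - 1))))
    (hγ : ∀ i, n ≤ i → i ≤ N → γ i = (fv (i - 1) - fstar) / (τv i - τv (i - 1)))
    (hf : ∀ i, n ≤ i → i ≤ N → fv i = fv (i - 1) - γ i / L i) :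
    ∀ i, n ≤ i → i ≤ N → τv (i - 1) * (fv (i - 1) - fstar) ≤ τv i * (fv i - fstar) := by
  have inv : ∀ i, n - 1 ≤ i → i ≤ N → 0 ≤ τv i ∧ fstar ≤ fv i := by
    intro i hni
    induction i, hni using Nat.le_induction with
    | base => intro _; exact ⟨hτ0, hf0⟩
    | succ i hi ih =>
      intro hiN
      have hni' : n ≤ i + 1 := by omega
      have hiN' : i ≤ N := by omega
      obtain ⟨ht, hfi⟩ := ih hiN'
      have hLi := hL (i+1) hni' hiN
      have hstep := spppa_step (L (i+1)) (τv i) (fv i) fstar hLi ht hfi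
      have e1 : (i + 1) - 1 = i := by omega
      rw [hτ (i+1) hni' hiN, hf (i+1) hni' hiN, hγ (i+1) hni' hiN,
        hτ (i+1) hni' hiN, e1]
      exact ⟨hstep.1, hstep.2.1⟩
  intro i hni hiN
  have ht := inv (i-1) (by omega) (by omega)
  have hLi := hL i hni hiN
  have hstep := (spppa_step (L i) (τv (i-1)) (fv (i-1)) fstar hLi ht.1 ht.2).2.2
  rw [hτ i hni hiN, hf i hni hiN, hγ i hni hiN, hτ i hni hiN]
  exact hstep
end
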